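/- For all s, ρ, σ ∈ ℕ there exist positive integers f = f(s,ρ,σ) and g = g(s,ρ,σ) with the following property. Let G be a graph and let (B, 𝒬) be a strong (f,g)-block in G such that B is a stable set and, for every 2-subset {x,y} of B, the interiors of the paths in 𝒬_{x,y} are pairwise anticomplete in G. Then either there is an induced subgraph of G isomorphic to a proper subdivision of K_s, or there is a linear induced K_{ρ,σ}-model in G. -/

import Mathlib

open SimpleGraph

/-- `H` is an induced minor of `G`: there are pairwise disjoint nonempty connected
induced subgraphs `X w` of `G`, one for each vertex `w` of `H`, such that distinct
branch sets are anticomplete iff the corresponding vertices are non-adjacent in `H`. -/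
def IsInducedMinor {V W : Type*} (G : SimpleGraph V) (H : SimpleGraph W) : Prop :=
  ∃ X : W → Set V,
    (∀ w, (X w).Nonempty) ∧
    (∀ w, (G.induce (X w)).Connected) ∧
    (∀ w₁ w₂, w₁ ≠ w₂ → Disjoint (X w₁) (X w₂)) ∧
    (∀ w₁ w₂, w₁ ≠ w₂ →
      ((∀ a ∈ X w₁, ∀ b ∈ X w₂, ¬ G.Adj a b) ↔ ¬ H.Adj w₁ w₂))

/-- The `t`-by-`t` hexagonal grid (wall), in the brick-wall representation. -/
def hexGrid (t : ℕ) : SimpleGraph (Fin t × Fin (2 * t)) :=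
  SimpleGraph.fromRel (fun a b =>
    (a.1 = b.1 ∧ a.2.val + 1 = b.2.val) ∨
    (a.2 = b.2 ∧ a.1.val + 1 = b.1.val ∧ (a.1.val + a.2.val) % 2 = 0))

/-- Membership in the class `𝒞_t` of `{K_{t,t}, W_{t×t}}`-induced-minor-free graphs. -/
def MemCt (t : ℕ) {V : Type*} (G : SimpleGraph V) : Prop :=
  ¬ IsInducedMinor G (completeBipartiteGraph (Fin t) (Fin t)) ∧
  ¬ IsInducedMinor G (hexGrid t)

/-- Membership in `𝒞_t^*`: member of `𝒞_t` with no clique of size `t`. -/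
def MemCtStar (t : ℕ) {V : Type*} (G : SimpleGraph V) : Prop :=
  MemCt t G ∧ G.CliqueFree t

/-- A tree decomposition of `G` with tree `τ` and bags `χ`. -/
def IsTreeDecomp {V T : Type*} (G : SimpleGraph V) (τ : SimpleGraph T)
    (χ : T → Finset V) : Prop :=
  τ.IsTree ∧
  (∀ v : V, ∃ i, v ∈ χ i) ∧
  (∀ u v : V, G.Adj u v → ∃ i, u ∈ χ i ∧ v ∈ χ i) ∧
  (∀ v : V, (τ.induce {i | v ∈ χ i}).Connected)

/-- The treewidth of a finite graph: the least `k` such that `G` admits a tree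
decomposition with all bags of size at most `k + 1`. -/
noncomputable def treewidth {V : Type*} [Fintype V] (G : SimpleGraph V) : ℕ :=
  sInf { k | ∃ (n : ℕ) (τ : SimpleGraph (Fin n)) (χ : Fin n → Finset V),
    IsTreeDecomp G τ χ ∧ ∀ i, (χ i).card ≤ k + 1 }

/-- A walk that is an induced (chordless) path. -/
def IsInducedPathW {V : Type*} (G : SimpleGraph V) {u v : V} (P : G.Walk u v) : Prop :=
  P.IsPath ∧ ∀ a ∈ P.support, ∀ b ∈ P.support, G.Adj a b → s(a, b) ∈ P.edges

/-- The interior of a path: its support minus its two ends. -/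
def interiorW {V : Type*} {G : SimpleGraph V} {u v : V} (P : G.Walk u v) : Set V :=
  {x | x ∈ P.support ∧ x ≠ u ∧ x ≠ v}

/-- `S` separates `a` from `b` in `G`: every walk from `a` to `b` meets `S`. -/
def Separates {V : Type*} (G : SimpleGraph V) (S : Set V) (a b : V) : Prop :=
  ∀ P : G.Walk a b, ∃ x ∈ S, x ∈ P.support

/-- `conn_G(a,b)`: the minimum size of an `a`–`b`-separator. -/
noncomputable def connNum {V : Type*} [Fintype V] (G : SimpleGraph V) (a b : V) : ℕ :=
  sInf { k | ∃ S : Set V, a ∉ S ∧ b ∉ S ∧ Separates G S a b ∧ S.ncard = k }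

/-- `A` and `B` are anticomplete: disjoint, with no edges between them. -/
def Anticomplete {V : Type*} (G : SimpleGraph V) (A B : Set V) : Prop :=
  Disjoint A B ∧ ∀ a ∈ A, ∀ b ∈ B, ¬ G.Adj a b

/-- The graph `G \ M`: delete the vertices of `M` (they become isolated). -/
def delVerts {V : Type*} (G : SimpleGraph V) (M : Set V) : SimpleGraph V where
  Adj a b := G.Adj a b ∧ a ∉ M ∧ b ∉ M
  symm := ⟨fun _ _ h => ⟨h.1.symm, h.2.2, h.2.1⟩⟩
  loopless := ⟨fun a h => G.irrefl h.1⟩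

/-- The set of connected components of `C` in `G`: maximal connected subsets of `C`. -/
def ccSet {V : Type*} (G : SimpleGraph V) (C : Set V) : Set (Set V) :=
  { D | D ⊆ C ∧ D.Nonempty ∧ (G.induce D).Connected ∧
      ∀ D' : Set V, D ⊆ D' → D' ⊆ C → (G.induce D').Connected → D' = D }

/-- `(a,b)` is `s`-wide: there are `s` pairwise internally anticomplete `a`–`b`-paths. -/
def Wide {V : Type*} (G : SimpleGraph V) (s : ℕ) (a b : V) : Prop :=
  ∃ P : Fin s → G.Walk a b,
    (∀ i, IsInducedPathW G (P i)) ∧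
    (∀ i j, i ≠ j → ∀ x ∈ interiorW (P i), ∀ y ∈ interiorW (P j), x ≠ y ∧ ¬ G.Adj x y)

/-- `(a,b)` is an `s`-slim pair: non-adjacent and not `s`-wide. -/
def SlimPair {V : Type*} (G : SimpleGraph V) (s : ℕ) (a b : V) : Prop :=
  a ≠ b ∧ ¬ G.Adj a b ∧ ¬ Wide G s a b

/-- `G` is `(t,s)`-slim: every stable set of size `t` contains an `s`-slim pair. -/
def TSSlim {V : Type*} (G : SimpleGraph V) (t s : ℕ) : Prop :=
  ∀ S : Finset V, S.card = t → (∀ a ∈ S, ∀ b ∈ S, a ≠ b → ¬ G.Adj a b) →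
    ∃ a ∈ S, ∃ b ∈ S, a ≠ b ∧ SlimPair G s a b

/-- `(X,Y,Z,C)` is a `(t,p)`-barrier in `G`. -/
def IsTPBarrier {V : Type*} (G : SimpleGraph V) (t p : ℕ) (X Y Z C : Set V) : Prop :=
  List.Pairwise Disjoint [X, Y, Z, C] ∧
  (∀ x ∈ X, ∀ z ∈ Z, ∀ P : G.Walk x z, IsInducedPathW G P →
    (∀ w ∈ P.support, w ∉ C) →
    ∃ x' ∈ X, ∃ z' ∈ Z, ∃ Q : G.Walk x' z',
      IsInducedPathW G Q ∧ (∀ w ∈ Q.support, w ∉ C) ∧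
      (∀ w ∈ Q.support, w ∈ P.support) ∧ (∀ w ∈ interiorW Q, w ∈ Y)) ∧
  (∀ x ∈ X, ∀ z ∈ Z, ∀ P : G.Walk x z, IsInducedPathW G P →
    (∀ w ∈ P.support, w ∉ C) →
    t ≤ Set.ncard { D ∈ ccSet G C | ∃ c ∈ D, ∃ w ∈ P.support, G.Adj c w }) ∧
  (∀ D ∈ ccSet G C, D.ncard ≤ p)

/-- The barrier `(X,Y,Z,C)` separates `u` from `v` in `G`. -/
def BarSeparates {V : Type*} (G : SimpleGraph V) (X Y Z C : Set V) (u v : V) : Prop :=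
  u ∉ X ∪ Y ∪ Z ∪ C ∧ v ∉ X ∪ Y ∪ Z ∪ C ∧
  Separates G (X ∪ C) u v ∧ Separates G (Z ∪ C) u v

/-- A barrier is reduced: every component of `X ∪ Y ∪ Z` meets both `X` and `Z`. -/
def ReducedBarrier {V : Type*} (G : SimpleGraph V) (X Y Z : Set V) : Prop :=
  ∀ D ∈ ccSet G (X ∪ Y ∪ Z), (D ∩ X).Nonempty ∧ (D ∩ Z).Nonempty

/-- `G` is `(s,t,p,c,f,g)`-slim-barred. -/
def SlimBarred {V : Type*} [Fintype V] (G : SimpleGraph V) (s t p : ℕ)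
    (c f g : ℕ → ℕ) : Prop :=
  ∀ u v : V, SlimPair G s u v →
    ∃ X Y Z C M : Set V,
      List.Pairwise Disjoint [X, Y, Z, C, M] ∧
      (∀ w ∈ X ∪ Y ∪ Z ∪ C ∪ M, w ≠ u ∧ w ≠ v) ∧
      IsTPBarrier (delVerts G M) t p X Y Z C ∧
      BarSeparates (delVerts G M) X Y Z C u v ∧
      Set.ncard (ccSet (delVerts G M) C) ≤ c (Fintype.card V) ∧
      M.ncard ≤ f (Fintype.card V) ∧
      (X ∪ Y ∪ Z).ncard ≤ g (Fintype.card V)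

/-- `(a,b)` is `(x,y,z,p)`-mineable in `G`. -/
def Mineable {V : Type*} (G : SimpleGraph V) (a b : V) (x y z p : ℕ) : Prop :=
  ∃ Ys Xs : Fin x → Set V,
    (∀ i, a ∉ Ys i ∧ b ∉ Ys i) ∧
    (∀ i j, i ≠ j → Anticomplete G (Ys i) (Ys j)) ∧
    (∀ i, (Xs i).Nonempty ∧ a ∉ Xs i ∧ b ∉ Xs i ∧
      Xs i ⊆ {w | w ∉ Ys i ∧ ∃ y' ∈ Ys i, G.Adj y' w}) ∧
    (∀ i, Separates (delVerts G {v | ∃ j, j < i ∧ v ∈ Ys j}) (Ys i ∪ Xs i) a b) ∧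
    (delVerts G {v | ∃ j, v ∈ Ys j}).Reachable a b ∧
    (∀ i, Set.ncard (ccSet G (Ys i)) ≤ y) ∧
    (∀ i, ∀ D ∈ ccSet G (Ys i), D.ncard ≤ p) ∧
    (∀ w : V, Set.ncard {i : Fin x | w ∈ Ys i ∪ Xs i} ≤ z)

/-- Two vertices are twins: same neighbourhoods away from each other. -/
def Twins {V : Type*} (G : SimpleGraph V) (u v : V) : Prop :=
  G.neighborSet u \ {v} = G.neighborSet v \ {u}

/-- A star structure on `G`: an induced star forest with vertex set `C ∪ L`, each
component a star with at least two vertices, with centers `C`, leaves `L`, and each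
leaf `l` attached to the center `ctr l`. -/
structure StarStructure {V : Type*} (G : SimpleGraph V) (C L : Set V)
    (ctr : V → V) : Prop where
  disj : Disjoint C L
  ctrMem : ∀ l ∈ L, ctr l ∈ C ∧ G.Adj (ctr l) l
  hasLeaf : ∀ c ∈ C, ∃ l ∈ L, ctr l = c
  inducedStar : ∀ a ∈ C ∪ L, ∀ b ∈ C ∪ L, G.Adj a b →
    (a ∈ C ∧ b ∈ L ∧ ctr b = a) ∨ (b ∈ C ∧ a ∈ L ∧ ctr a = b)

/-- Centers of the projection `F(G')` of the star forest onto the induced subgraph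
of `G` with vertex set `W`. -/
def projCenters {V : Type*} (C L : Set V) (ctr : V → V) (W : Set V) : Set V :=
  {c | c ∈ C ∧ c ∈ W ∧ ∃ l, l ∈ L ∧ l ∈ W ∧ ctr l = c}

/-- The star of `F(G')` with center `c`. -/
def projStar {V : Type*} (L : Set V) (ctr : V → V) (W : Set V) (c : V) : Set V :=
  insert c {l | l ∈ L ∧ l ∈ W ∧ ctr l = c}

/-- The vertex set of `F(G')`. -/
def projVerts {V : Type*} (C L : Set V) (ctr : V → V) (W : Set V) : Set V :=
  ⋃ c ∈ projCenters C L ctr W, projStar L ctr W c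

/-- `X` is an `F(G')`-based set. -/
def FBasedSet {V : Type*} (C L : Set V) (ctr : V → V) (W X : Set V) : Prop :=
  ∀ c ∈ projCenters C L ctr W,
    (projStar L ctr W c ∩ X).Nonempty → projStar L ctr W c ⊆ X

/-- The `F(G')`-measure of a set `X`: the number of stars of `F(G')` meeting `X` plus
the number of vertices of `X` outside `F(G')`. -/
noncomputable def FMeasure {V : Type*} (C L : Set V) (ctr : V → V) (W X : Set V) : ℕ :=
  Set.ncard {c ∈ projCenters C L ctr W | (projStar L ctr W c ∩ X).Nonempty} +
  Set.ncard (X \ projVerts C L ctr W)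

/-- A tree decomposition of the induced subgraph of `G` with vertex set `W`. -/
def IsTreeDecompOn {V T : Type*} (G : SimpleGraph V) (W : Set V)
    (τ : SimpleGraph T) (χ : T → Finset V) : Prop :=
  τ.IsTree ∧
  (∀ i, (χ i : Set V) ⊆ W) ∧
  (∀ v ∈ W, ∃ i, v ∈ χ i) ∧
  (∀ u ∈ W, ∀ v ∈ W, G.Adj u v → ∃ i, u ∈ χ i ∧ v ∈ χ i) ∧
  (∀ v : V, (τ.induce {i | v ∈ χ i}).Connected)

/-- `G` is `(F,r)`-based: every induced subgraph `G[W]` admits a tree decomposition in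
which every bag is `F(G[W])`-based with `F(G[W])`-measure at most `r`. -/
def FrBased {V : Type*} [Fintype V] (G : SimpleGraph V) (C L : Set V)
    (ctr : V → V) (r : ℕ) : Prop :=
  ∀ W : Set V, ∃ (n : ℕ) (τ : SimpleGraph (Fin n)) (χ : Fin n → Finset V),
    IsTreeDecompOn G W τ χ ∧
    ∀ i, FBasedSet C L ctr W (χ i) ∧ FMeasure C L ctr W (χ i) ≤ r

/-- Every component of `H` is a star or a single vertex. -/
def IsStarForest {W : Type*} (H : SimpleGraph W) : Prop :=
  H.IsAcyclic ∧ ∀ (u v : W) (P : H.Walk u v), P.IsPath → P.length ≤ 2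

/-- `G` has a star coloring with `k` colors. -/
def HasStarColoring {V : Type*} (G : SimpleGraph V) (k : ℕ) : Prop :=
  ∃ f : V → Fin k, (∀ u v, G.Adj u v → f u ≠ f v) ∧
    ∀ i j : Fin k, IsStarForest (G.induce {v | f v = i ∨ f v = j})

/-- `G` contains an induced subgraph isomorphic to a proper subdivision of `K_s`. -/
def InducedProperSubdivisionK {V : Type*} (G : SimpleGraph V) (s : ℕ) : Prop :=
  ∃ (v : Fin s → V) (P : ∀ i j : Fin s, G.Walk (v i) (v j)),
    Function.Injective v ∧
    (∀ i j, i ≠ j → ¬ G.Adj (v i) (v j)) ∧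
    (∀ i j, i < j → IsInducedPathW G (P i j) ∧ (interiorW (P i j)).Nonempty) ∧
    (∀ i j k l, i < j → k < l → (i, j) ≠ (k, l) →
      ∀ x ∈ interiorW (P i j), ∀ y ∈ interiorW (P k l), x ≠ y ∧ ¬ G.Adj x y) ∧
    (∀ i j k, i < j → k ≠ i → k ≠ j →
      ∀ x ∈ interiorW (P i j), x ≠ v k ∧ ¬ G.Adj x (v k))

/-- `S` is the vertex set of an induced path of `G`. -/
def IsPathSet {V : Type*} (G : SimpleGraph V) (S : Set V) : Prop :=
  ∃ (u v : V) (P : G.Walk u v), IsInducedPathW G P ∧ S = {x | x ∈ P.support}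

/-- A linear induced `H`-model in `G`: an induced `H`-model all of whose branch sets
are paths. -/
def LinearInducedModel {V W : Type*} (G : SimpleGraph V) (H : SimpleGraph W) : Prop :=
  ∃ X : W → Set V,
    (∀ w, IsPathSet G (X w)) ∧
    (∀ w, (X w).Nonempty) ∧
    (∀ w₁ w₂, w₁ ≠ w₂ → Disjoint (X w₁) (X w₂)) ∧
    (∀ w₁ w₂, w₁ ≠ w₂ →
      ((∀ a ∈ X w₁, ∀ b ∈ X w₂, ¬ G.Adj a b) ↔ ¬ H.Adj w₁ w₂))

/-!
Fix `g` paths for every pair of `B`. If some pair has many vertices of `B` that each meet or see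
more than `ρ` of its paths, pigeonhole on the `ρ`-subsets of these paths gives a `K_{ρ,σ}`-model
whose `σ` side consists of single vertices. Otherwise a union bound over the `s`-subsets of `B`
finds `s` vertices none of which is heavy for a pair of the others. Order the pairs of these
vertices and shrink their families so that each outnumbers the `ρ`-subsets of all later ones.
Then few paths of a family conflict with `ρ` paths of a later family, unless pigeonhole again
gives a `K_{ρ,σ}`-model, now with paths on both sides. Discarding those paths and the ones meeting
or seeing the chosen vertices, a path for every pair can be picked greedily, each earlier choice
excluding fewer than `ρ` candidates; these paths form an induced proper subdivision of `K_s`.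
-/

open Finset Function

open scoped Classical

variable {V : Type*} {G : SimpleGraph V}

theorem exists_forall_mem_forall_lt_not_rel {ι : Type*} [Fintype ι] [LinearOrder ι]
    {β : ι → Type*} (A : ∀ i, Finset (β i)) (R : ∀ i j, β i → β j → Prop)
    [∀ i j a b, Decidable (R i j a b)] (d : ℕ)
    (hR : ∀ i j, i < j → ∀ a ∈ A i, #{b ∈ A j | R i j a b} ≤ d)
    (hA : ∀ i, Fintype.card ι * d < #(A i)) :
    ∃ c : ∀ i, β i, ∀ i, c i ∈ A i ∧ ∀ j < i, ¬ R j i (c j) (c i) := by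
  suffices ∀ T : Finset ι, ∃ c : ∀ i, β i,
      ∀ i ∈ T, c i ∈ A i ∧ ∀ j ∈ T, j < i → ¬ R j i (c j) (c i) by
    obtain ⟨c, hc⟩ := this univ
    exact ⟨c, fun i => ⟨(hc i (mem_univ i)).1, fun j => (hc i (mem_univ i)).2 j (mem_univ j)⟩⟩
  intro T
  induction T using Finset.induction_on_max with
  | empty =>
    exact ⟨fun i => (card_pos.1 (Nat.zero_lt_of_lt (hA i))).choose, by simp⟩
  | insert a T hTa ih =>
    obtain ⟨c, hc⟩ := ih
    let blocked := T.biUnion fun j => {b ∈ A a | R j a (c j) b}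
    have hblocked : #blocked < #(A a) := calc
      #blocked ≤ ∑ j ∈ T, #{b ∈ A a | R j a (c j) b} := card_biUnion_le
      _ ≤ ∑ _j ∈ T, d := sum_le_sum fun j hj => hR j a (hTa j hj) _ (hc j hj).1
      _ ≤ Fintype.card ι * d := by
        rw [sum_const, smul_eq_mul]; exact Nat.mul_le_mul_right _ (card_le_univ T)
      _ < #(A a) := hA a
    obtain ⟨b, hb, hbfree⟩ := exists_mem_notMem_of_card_lt_card hblocked
    have hupd : ∀ i ∈ T, update c a b i = c i := fun i hi => update_of_ne (hTa i hi).ne _ _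
    refine ⟨update c a b, fun i hi => ?_⟩
    rcases mem_insert.1 hi with rfl | hi
    · refine ⟨by rw [update_self]; exact hb, fun j hj hji => ?_⟩
      have hjT : j ∈ T := (mem_insert.1 hj).resolve_left hji.ne
      rw [update_self, hupd j hjT]
      exact fun hR => hbfree (mem_biUnion.2 ⟨j, hjT, mem_filter.2 ⟨hb, hR⟩⟩)
    · refine ⟨by rw [hupd i hi]; exact (hc i hi).1, fun j hj hji => ?_⟩
      have hjT : j ∈ T := (mem_insert.1 hj).resolve_left (hji.trans (hTa i hi)).ne
      rw [hupd i hi, hupd j hjT]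
      exact (hc i hi).2 j hjT hji

theorem Finset.exists_subset_card_eq_forall_not_subset {α : Type*} {B : Finset α}
    {T : Finset (Finset α)} {r s : ℕ} (hT : ∀ t ∈ T, t ⊆ B ∧ #t = r) (hs : s ≤ #B)
    (hcard : #T * s.choose r < (#B).choose r) :
    ∃ S ⊆ B, #S = s ∧ ∀ t ∈ T, ¬ t ⊆ S := by
  by_cases hrs : s < r
  · obtain ⟨S, hS, hScard⟩ := exists_subset_card_eq hs
    refine ⟨S, hS, hScard, fun t ht hts => ?_⟩
    have := card_le_card hts
    have := (hT t ht).2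
    omega
  push Not at hrs
  have hsupersets : ∀ t ∈ T, #{S ∈ B.powersetCard s | t ⊆ S} ≤ (#B - r).choose (s - r) := by
    intro t ht
    obtain ⟨htB, htcard⟩ := hT t ht
    rw [← htcard, ← card_sdiff_of_subset htB, ← card_powersetCard]
    refine card_le_card_of_injOn (· \ t) (fun S hS => ?_) fun S₁ hS₁ S₂ hS₂ h => ?_
    · simp only [mem_coe, mem_filter, mem_powersetCard] at hS ⊢
      exact ⟨sdiff_subset_sdiff hS.1.1 le_rfl, by rw [card_sdiff_of_subset hS.2, hS.1.2]⟩
    · simp only [mem_coe, mem_filter] at hS₁ hS₂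
      rw [← sdiff_union_of_subset hS₁.2, ← sdiff_union_of_subset hS₂.2]
      exact congrArg (· ∪ t) h
  have hbad : #{S ∈ B.powersetCard s | ∃ t ∈ T, t ⊆ S} < #(B.powersetCard s) := calc
    _ ≤ #(T.biUnion fun t => {S ∈ B.powersetCard s | t ⊆ S}) := card_le_card fun S hS => by
        obtain ⟨hS, t, ht, hts⟩ := mem_filter.1 hS
        exact mem_biUnion.2 ⟨t, ht, mem_filter.2 ⟨hS, hts⟩⟩
    _ ≤ ∑ t ∈ T, #{S ∈ B.powersetCard s | t ⊆ S} := card_biUnion_le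
    _ ≤ #T * (#B - r).choose (s - r) := by
        simpa only [smul_eq_mul] using sum_le_card_nsmul _ _ _ hsupersets
    _ < #(B.powersetCard s) := by
        rw [card_powersetCard]
        refine Nat.lt_of_mul_lt_mul_right (a := (#B).choose r) ?_
        calc #T * (#B - r).choose (s - r) * (#B).choose r
            = #T * ((#B).choose r * (#B - r).choose (s - r)) := by ring
          _ = (#B).choose s * (#T * s.choose r) := by rw [← Nat.choose_mul hrs]; ring
          _ < (#B).choose s * (#B).choose r :=
            Nat.mul_lt_mul_of_pos_left hcard (Nat.choose_pos hs)
  obtain ⟨S, hS, hSgood⟩ := exists_mem_notMem_of_card_lt_card hbad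
  rw [mem_powersetCard] at hS
  exact ⟨S, hS.1, hS.2, fun t ht hts => hSgood (mem_filter.2 ⟨mem_powersetCard.2 hS, t, ht, hts⟩)⟩

theorem mul_mul_lt_choose_three {K n : ℕ} (hn : 6 * K + 4 ≤ n) : n * n * K < n.choose 3 := by
  obtain ⟨k, rfl⟩ := Nat.exists_eq_add_of_le' (show 3 ≤ n by omega)
  have hchoose : (k + 3).choose 3 * 6 = (k + 3) * (k + 2) * (k + 1) := by
    have := Nat.descFactorial_eq_factorial_mul_choose (k + 3) 3
    simp only [Nat.descFactorial_succ, Nat.descFactorial_zero, Nat.factorial_succ,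
      Nat.factorial_zero] at this
    rw [show k + 3 - 2 = k + 1 by omega, show k + 3 - 1 = k + 2 by omega, Nat.sub_zero] at this
    linarith
  nlinarith

/-- Shrink `B` to `n = 6 b C(s,3) + 4 + s` elements; a union bound over its `s`-subsets then
avoids the at most `n² b` triples `{x, y, z}` with `z ∈ Bad x y`. -/
theorem Finset.exists_subset_card_eq_forall_notMem {α : Type*} {B : Finset α}
    (Bad : α → α → Finset α) {b s : ℕ} (hBad : ∀ x ∈ B, ∀ y ∈ B, x ≠ y → #(Bad x y) ≤ b)
    (hB : 6 * (b * s.choose 3) + 4 + s ≤ #B) :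
    ∃ S ⊆ B, #S = s ∧ ∀ x ∈ S, ∀ y ∈ S, ∀ z ∈ S, x ≠ y → z ≠ x → z ≠ y → z ∉ Bad x y := by
  obtain ⟨B', hB', hB'card⟩ := exists_subset_card_eq hB
  set n := 6 * (b * s.choose 3) + 4 + s
  let T := B'.offDiag.biUnion fun p => ((Bad p.1 p.2 ∩ B') \ {p.1, p.2}).image
    fun z => ({z, p.1, p.2} : Finset α)
  have hT : ∀ t ∈ T, t ⊆ B' ∧ #t = 3 := by
    intro t ht
    simp only [T, mem_biUnion, mem_offDiag, mem_image, mem_sdiff, mem_inter, mem_insert,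
      mem_singleton, not_or] at ht
    obtain ⟨⟨x, y⟩, ⟨hx, hy, hxy⟩, z, ⟨⟨-, hz⟩, hzx, hzy⟩, rfl⟩ := ht
    refine ⟨by simp [insert_subset_iff, hx, hy, hz], ?_⟩
    rw [card_insert_of_notMem (by simp [hzx, hzy]), card_pair hxy]
  have hTcard : #T ≤ n * n * b := calc
    #T ≤ ∑ p ∈ B'.offDiag, b := card_biUnion_le.trans (sum_le_sum fun p hp => by
        obtain ⟨hx, hy, hxy⟩ := mem_offDiag.1 hp
        exact card_image_le.trans ((card_le_card (sdiff_subset.trans inter_subset_left)).trans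
          (hBad _ (hB' hx) _ (hB' hy) hxy)))
    _ ≤ n * n * b := by
        rw [sum_const, smul_eq_mul, offDiag_card, hB'card]
        exact Nat.mul_le_mul_right _ (Nat.sub_le _ _)
  obtain ⟨S, hSB', hScard, hS⟩ := exists_subset_card_eq_forall_not_subset hT (by omega)
    (calc #T * s.choose 3 ≤ n * n * (b * s.choose 3) := by
            rw [← mul_assoc]; exact Nat.mul_le_mul_right _ hTcard
      _ < (#B').choose 3 := hB'card ▸ mul_mul_lt_choose_three (by omega))
  refine ⟨S, hSB'.trans hB', hScard, fun x hx y hy z hz hxy hzx hzy hzBad => ?_⟩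
  refine hS ({z, x, y} : Finset α)
    (mem_biUnion.2 ⟨(x, y), mem_offDiag.2 ⟨hSB' hx, hSB' hy, hxy⟩, ?_⟩) ?_
  · exact mem_image.2 ⟨z, by simp [hzBad, hSB' hz, hzx, hzy], rfl⟩
  · simp [insert_subset_iff, hx, hy, hz]

theorem Set.exists_finset_subset_card_eq {α : Type*} {s : Set α} {n : ℕ} (hn : 0 < n)
    (h : n ≤ s.ncard) : ∃ t : Finset α, ↑t ⊆ s ∧ #t = n := by
  obtain ⟨t, ht, htcard⟩ := Set.exists_subset_card_eq h
  have hfin := Set.finite_of_ncard_pos (htcard ▸ hn)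
  exact ⟨hfin.toFinset, by simpa using ht, by rw [← htcard, Set.ncard_eq_toFinset_card t hfin]⟩

theorem anticomplete_iff {A B : Set V} :
    Anticomplete G A B ↔ ∀ a ∈ A, ∀ b ∈ B, a ≠ b ∧ ¬ G.Adj a b := by
  simp only [Anticomplete, Set.disjoint_left]
  exact ⟨fun h a ha b hb => ⟨fun hab => h.1 ha (hab ▸ hb), h.2 a ha b hb⟩,
    fun h => ⟨fun a ha hb => (h a ha a hb).1 rfl, fun a ha b hb => (h a ha b hb).2⟩⟩

theorem Anticomplete.symm {A B : Set V} (h : Anticomplete G A B) : Anticomplete G B A :=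
  ⟨h.1.symm, fun b hb a ha hab => h.2 a ha b hb hab.symm⟩

theorem anticomplete_comm {A B : Set V} : Anticomplete G A B ↔ Anticomplete G B A :=
  ⟨Anticomplete.symm, Anticomplete.symm⟩

theorem IsPathSet.nonempty {S : Set V} (h : IsPathSet G S) : S.Nonempty := by
  obtain ⟨u, -, P, -, rfl⟩ := h
  exact ⟨u, P.start_mem_support⟩

theorem isPathSet_singleton (z : V) : IsPathSet G {z} :=
  ⟨z, z, .nil, ⟨.nil, fun a ha b hb hab => by simp_all⟩, by ext; simp⟩

theorem IsInducedPathW.isPathSet_interiorW {u v : V} {P : G.Walk u v}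
    (hP : IsInducedPathW G P) (huv : u ≠ v) (hadj : ¬ G.Adj u v) :
    IsPathSet G (interiorW P) := by
  obtain ⟨a, h₁, P', rfl⟩ := Walk.exists_eq_cons_of_ne huv P
  cases P' with
  | nil => exact absurd h₁ hadj
  | cons h p =>
    obtain ⟨b, I, h₂, hI⟩ := Walk.exists_cons_eq_concat h p
    rw [hI] at hP ⊢
    have hnd := (Walk.isPath_def _).1 hP.1
    simp only [Walk.support_cons, Walk.support_concat, List.nodup_cons, List.nodup_append,
      List.mem_append, List.mem_singleton] at hnd
    have hu : u ∉ I.support := fun h => hnd.1 (Or.inl h)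
    have hv : v ∉ I.support := fun h => hnd.2.2.2 v h v rfl rfl
    refine ⟨a, b, I, ⟨(Walk.isPath_def _).2 hnd.2.1, fun x hx y hy hxy => ?_⟩, ?_⟩
    · have := hP.2 x (by simp [hx]) y (by simp [hy]) hxy
      simp only [Walk.edges_cons, Walk.edges_concat, List.concat_eq_append, List.mem_cons,
        List.mem_append, Sym2.eq_iff] at this
      grind
    · ext x
      simp only [interiorW, Walk.support_cons, Walk.support_concat, List.mem_cons,
        List.mem_append, Set.mem_ofPred_eq]
      grind

theorem linearInducedModel_of_forall {W : Type*} {H : SimpleGraph W} (X : W → Set V)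
    (hX : ∀ w, IsPathSet G (X w))
    (hadj : ∀ w₁ w₂, H.Adj w₁ w₂ → Disjoint (X w₁) (X w₂) ∧ ¬ Anticomplete G (X w₁) (X w₂))
    (hnadj : ∀ w₁ w₂, w₁ ≠ w₂ → ¬ H.Adj w₁ w₂ → Anticomplete G (X w₁) (X w₂)) :
    LinearInducedModel G H := by
  refine ⟨X, hX, fun w => (hX w).nonempty, fun w₁ w₂ hne => ?_, fun w₁ w₂ hne => ?_⟩
  · by_cases h : H.Adj w₁ w₂
    exacts [(hadj w₁ w₂ h).1, (hnadj w₁ w₂ hne h).1]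
  · by_cases h : H.Adj w₁ w₂
    · have := (hadj w₁ w₂ h).2
      simp only [Anticomplete, (hadj w₁ w₂ h).1, true_and] at this
      simp [this, h]
    · simpa [h] using (hnadj w₁ w₂ hne h).2

theorem linearInducedModel_completeBipartiteGraph {ρ σ : ℕ} {L : Fin ρ → Set V}
    {R : Fin σ → Set V} (hL : ∀ i, IsPathSet G (L i)) (hR : ∀ j, IsPathSet G (R j))
    (hLL : Pairwise (Anticomplete G on L)) (hRR : Pairwise (Anticomplete G on R))
    (hLR : ∀ i j, Disjoint (L i) (R j) ∧ ¬ Anticomplete G (L i) (R j)) :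
    LinearInducedModel G (completeBipartiteGraph (Fin ρ) (Fin σ)) := by
  refine linearInducedModel_of_forall (Sum.elim L R) (Sum.rec hL hR) ?_ ?_
  · rintro (i | i) (j | j) h
    · simp at h
    · exact hLR i j
    · exact ⟨(hLR j i).1.symm, fun h => (hLR j i).2 h.symm⟩
    · simp at h
  · rintro (i | i) (j | j) hne h
    · exact hLL fun hij => hne (congrArg _ hij)
    · simp at h
    · simp at h
    · exact hRR fun hij => hne (congrArg _ hij)

/-- The `K_{ρ,σ}`-model is found by pigeonhole on the `ρ`-subsets of `L` that the members
of `R` attach to. -/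
theorem linearInducedModel_of_many_attached {ι κ : Type*} {ρ σ : ℕ} {X : ι → Set V}
    {Y : κ → Set V} {L : Finset ι} {R : Finset κ}
    (hX : ∀ i ∈ L, IsPathSet G (X i)) (hY : ∀ k ∈ R, IsPathSet G (Y k))
    (hXX : (L : Set ι).Pairwise (Anticomplete G on X))
    (hYY : (R : Set κ).Pairwise (Anticomplete G on Y))
    (hXY : ∀ k ∈ R, ρ ≤ #{i ∈ L | Disjoint (X i) (Y k) ∧ ¬ Anticomplete G (X i) (Y k)})
    (hR : (#L).choose ρ * (σ - 1) < #R) :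
    LinearInducedModel G (completeBipartiteGraph (Fin ρ) (Fin σ)) := by
  have hattach : ∀ k ∈ R, ∃ A ∈ L.powersetCard ρ,
      ∀ i ∈ A, Disjoint (X i) (Y k) ∧ ¬ Anticomplete G (X i) (Y k) := by
    intro k hk
    obtain ⟨A, hA, hAcard⟩ := exists_subset_card_eq (hXY k hk)
    exact ⟨A, mem_powersetCard.2 ⟨hA.trans (filter_subset _ _), hAcard⟩,
      fun i hi => (mem_filter.1 (hA hi)).2⟩
  choose! φ hφ hφattach using hattach
  obtain ⟨A, hA, hfiber⟩ := exists_lt_card_fiber_of_mul_lt_card_of_maps_to hφ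
    (by rwa [card_powersetCard])
  obtain ⟨C, hC, hCcard⟩ := exists_subset_card_eq (Nat.le_of_pred_lt hfiber)
  obtain ⟨hAL, hAcard⟩ := mem_powersetCard.1 hA
  have hCR : ∀ k ∈ C, k ∈ R ∧ φ k = A := fun k hk => mem_filter.1 (hC hk)
  let a := (A.equivFinOfCardEq hAcard).symm
  let c := (C.equivFinOfCardEq hCcard).symm
  refine linearInducedModel_completeBipartiteGraph (L := fun i => X (a i)) (R := fun j => Y (c j))
    (fun i => hX _ (hAL (a i).2)) (fun j => hY _ (hCR _ (c j).2).1)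
    (fun i j hij => hXX (hAL (a i).2) (hAL (a j).2) ?_)
    (fun i j hij => hYY (hCR _ (c i).2).1 (hCR _ (c j).2).1 ?_) fun i j => ?_
  · exact fun h => hij (a.injective (Subtype.ext h))
  · exact fun h => hij (c.injective (Subtype.ext h))
  · have hj := hCR _ (c j).2
    exact hφattach _ hj.1 _ (hj.2 ▸ (a i).2)

theorem card_conflicting_le_of_not_linearInducedModel {ρ σ : ℕ} {x y x' y' : V}
    {F : Finset (G.Walk x y)} {F' : Finset (G.Walk x' y')}
    (hF : ∀ P ∈ F, IsPathSet G (interiorW P)) (hF' : ∀ P ∈ F', IsPathSet G (interiorW P))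
    (hantiF : (F : Set (G.Walk x y)).Pairwise (Anticomplete G on interiorW))
    (hantiF' : (F' : Set (G.Walk x' y')).Pairwise (Anticomplete G on interiorW))
    (hdisj : ∀ P ∈ F', ∀ Q ∈ F, Disjoint (interiorW P) (interiorW Q))
    (hmodel : ¬ LinearInducedModel G (completeBipartiteGraph (Fin ρ) (Fin σ))) :
    #{P ∈ F' | ρ ≤ #{Q ∈ F | ¬ Anticomplete G (interiorW P) (interiorW Q)}} ≤
      (#F).choose ρ * (σ - 1) := by
  refine not_lt.1 fun hlt => hmodel ?_
  refine linearInducedModel_of_many_attached (X := interiorW) (Y := interiorW) hF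
    (fun P hP => hF' P (mem_filter.1 hP).1) hantiF
    (hantiF'.mono (coe_subset.2 (filter_subset _ _))) (fun P hP => ?_) hlt
  rw [mem_filter] at hP
  convert hP.2 using 2
  refine filter_congr fun Q hQ => ?_
  rw [anticomplete_comm]
  exact and_iff_right (hdisj P hP.1 Q hQ).symm

section PathSystem

variable {ι : Type*} [Fintype ι] [LinearOrder ι] {x y : ι → V}

noncomputable def goodPaths (Fam : ∀ p, Finset (G.Walk (x p) (y p))) (Z : Finset V) (ρ : ℕ)
    (p : ι) : Finset (G.Walk (x p) (y p)) :=
  {P ∈ Fam p | (∀ z ∈ Z, z ≠ x p → z ≠ y p → Anticomplete G (interiorW P) {z}) ∧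
    ∀ q, p < q → #{Q ∈ Fam q | ¬ Anticomplete G (interiorW P) (interiorW Q)} < ρ}

variable {Fam : ∀ p, Finset (G.Walk (x p) (y p))} {Z : Finset V} {ρ σ : ℕ}
  (hpath : ∀ p, ∀ P ∈ Fam p, IsPathSet G (interiorW P))
  (hanti : ∀ p, (Fam p : Set (G.Walk (x p) (y p))).Pairwise (Anticomplete G on interiorW))
  (hdisj : ∀ p q, p ≠ q → ∀ P ∈ Fam p, ∀ Q ∈ Fam q, Disjoint (interiorW P) (interiorW Q))
  (hZ : ∀ p, ∀ z ∈ Z, z ≠ x p → z ≠ y p →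
    #{P ∈ Fam p | ¬ Anticomplete G (interiorW P) {z}} ≤ ρ)
  (hsize : ∀ p, #Z * ρ + Fintype.card ι * ρ + ∑ q with p < q, (#(Fam q)).choose ρ * (σ - 1)
    < #(Fam p))
include hpath hanti hdisj hZ hsize

theorem linearInducedModel_or_card_lt_goodPaths :
    LinearInducedModel G (completeBipartiteGraph (Fin ρ) (Fin σ)) ∨
      ∀ p, Fintype.card ι * ρ < #(goodPaths Fam Z ρ p) := by
  refine or_iff_not_imp_left.2 fun hmodel p => ?_
  have hbad : Fam p \ goodPaths Fam Z ρ p ⊆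
      {z ∈ Z | z ≠ x p ∧ z ≠ y p}.biUnion (fun z =>
        {P ∈ Fam p | ¬ Anticomplete G (interiorW P) {z}}) ∪
      ({q | p < q} : Finset ι).biUnion (fun q => {P ∈ Fam p |
        ρ ≤ #{Q ∈ Fam q | ¬ Anticomplete G (interiorW P) (interiorW Q)}}) := by
    intro P hP
    simp only [goodPaths, mem_sdiff, mem_filter, not_and, not_forall, not_lt] at hP
    simp only [mem_union, mem_biUnion, mem_filter, mem_univ, true_and]
    by_cases hPZ : ∀ z ∈ Z, z ≠ x p → z ≠ y p → Anticomplete G (interiorW P) {z}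
    · obtain ⟨q, hpq, hq⟩ := hP.2 hP.1 hPZ
      exact Or.inr ⟨q, hpq, hP.1, hq⟩
    · push Not at hPZ
      obtain ⟨z, hz, hzx, hzy, hzP⟩ := hPZ
      exact Or.inl ⟨z, ⟨hz, hzx, hzy⟩, hP.1, hzP⟩
  have hbad_card : #(Fam p \ goodPaths Fam Z ρ p) ≤
      #Z * ρ + ∑ q with p < q, (#(Fam q)).choose ρ * (σ - 1) := calc
    _ ≤ _ := (card_le_card hbad).trans (card_union_le _ _)
    _ ≤ ∑ z ∈ Z with z ≠ x p ∧ z ≠ y p, ρ +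
          ∑ q with p < q, (#(Fam q)).choose ρ * (σ - 1) :=
      add_le_add (card_biUnion_le.trans (sum_le_sum fun z hz => by
          obtain ⟨hz, hzx, hzy⟩ := mem_filter.1 hz
          exact hZ p z hz hzx hzy))
        (card_biUnion_le.trans (sum_le_sum fun q hq => card_conflicting_le_of_not_linearInducedModel
          (hpath q) (hpath p) (hanti q) (hanti p) (hdisj p q (mem_filter.1 hq).2.ne) hmodel))
    _ ≤ _ := by
      rw [sum_const, smul_eq_mul]
      exact Nat.add_le_add_right (Nat.mul_le_mul_right _ (card_filter_le _ _)) _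
  have := card_le_card_sdiff_add_card (s := Fam p) (t := goodPaths Fam Z ρ p)
  have := hsize p
  omega

theorem linearInducedModel_or_exists_anticomplete_paths :
    LinearInducedModel G (completeBipartiteGraph (Fin ρ) (Fin σ)) ∨
      ∃ P : ∀ p, G.Walk (x p) (y p), ∀ p, P p ∈ Fam p ∧
        (∀ z ∈ Z, z ≠ x p → z ≠ y p → Anticomplete G (interiorW (P p)) {z}) ∧
        ∀ q, q ≠ p → Anticomplete G (interiorW (P p)) (interiorW (P q)) := by
  refine (linearInducedModel_or_card_lt_goodPaths hpath hanti hdisj hZ hsize).imp id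
    fun hgood => ?_
  obtain ⟨P, hP⟩ := exists_forall_mem_forall_lt_not_rel (goodPaths Fam Z ρ)
    (fun _ _ P Q => ¬ Anticomplete G (interiorW P) (interiorW Q)) ρ
    (fun p q hpq P hP => (card_le_card (filter_subset_filter _ (filter_subset _ _))).trans
      ((mem_filter.1 hP).2.2 q hpq).le) hgood
  have hlt : ∀ p q, q < p → Anticomplete G (interiorW (P q)) (interiorW (P p)) :=
    fun p q h => not_not.1 ((hP p).2 q h)
  refine ⟨P, fun p => ⟨(mem_filter.1 (hP p).1).1, (mem_filter.1 (hP p).1).2.1, fun q hqp => ?_⟩⟩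
  rcases hqp.lt_or_gt with h | h
  exacts [(hlt p q h).symm, hlt q p h]

end PathSystem

section FamilySizes

variable {ι : Type*} [Fintype ι] [LinearOrder ι]

/-- Family sizes indexed by the number of later pairs: each family must outnumber the
`ρ`-subsets of all later families together, see `add_sum_lt_familySize`. -/
def familySize (a N ρ σ : ℕ) : ℕ → ℕ
  | 0 => a + 1
  | k + 1 => familySize a N ρ σ k + a + N * ((familySize a N ρ σ k).choose ρ * (σ - 1)) + 1

theorem familySize_monotone (a N ρ σ : ℕ) : Monotone (familySize a N ρ σ) :=
  monotone_nat_of_le_succ fun k => by simp only [familySize]; omega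

theorem add_sum_lt_familySize {a N ρ σ : ℕ}
    (hN : Fintype.card ι ≤ N) (p : ι) :
    a + ∑ q with p < q, (familySize a N ρ σ #{r | q < r}).choose ρ * (σ - 1) <
      familySize a N ρ σ #{q | p < q} := by
  rcases hk : #{q | p < q} with _ | k
  · rw [card_eq_zero.1 hk, sum_empty]
    exact Nat.lt_succ_self a
  have hlater : ∀ q ∈ ({q | p < q} : Finset ι), #{r | q < r} ≤ k := by
    intro q hq
    have hpq : p < q := (mem_filter.1 hq).2
    have hsub : ({r | q < r} : Finset ι) ⊂ ({r | p < r} : Finset ι) := by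
      refine (Finset.ssubset_iff_of_subset fun r hr => ?_).2 ⟨q, hq, by simp⟩
      simp only [mem_filter, mem_univ, true_and] at hr ⊢
      exact hpq.trans hr
    have := card_lt_card hsub
    omega
  calc a + ∑ q with p < q, (familySize a N ρ σ #{r | q < r}).choose ρ * (σ - 1)
      ≤ a + (k + 1) * ((familySize a N ρ σ k).choose ρ * (σ - 1)) := by
        gcongr
        simpa only [hk, smul_eq_mul] using sum_le_card_nsmul _ _ _ fun q hq => Nat.mul_le_mul_right _
          (Nat.choose_le_choose _ (familySize_monotone _ _ _ _ (hlater q hq)))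
    _ ≤ a + N * ((familySize a N ρ σ k).choose ρ * (σ - 1)) := by
        gcongr
        exact (hk ▸ card_le_univ _).trans hN
    _ < familySize a N ρ σ (k + 1) := by simp only [familySize]; omega

variable {x y : ι → V}

theorem linearInducedModel_or_exists_anticomplete_paths_of_le_card
    {F : ∀ p, Finset (G.Walk (x p) (y p))} {Z : Finset V} {a N ρ σ : ℕ}
    (hN : Fintype.card ι ≤ N) (ha : #Z * ρ + N * ρ ≤ a)
    (hpath : ∀ p, ∀ P ∈ F p, IsPathSet G (interiorW P))
    (hanti : ∀ p, (F p : Set (G.Walk (x p) (y p))).Pairwise (Anticomplete G on interiorW))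
    (hdisj : ∀ p q, p ≠ q → ∀ P ∈ F p, ∀ Q ∈ F q, Disjoint (interiorW P) (interiorW Q))
    (hZ : ∀ p, ∀ z ∈ Z, z ≠ x p → z ≠ y p →
      #{P ∈ F p | ¬ Anticomplete G (interiorW P) {z}} ≤ ρ)
    (hcard : ∀ p, familySize a N ρ σ N ≤ #(F p)) :
    LinearInducedModel G (completeBipartiteGraph (Fin ρ) (Fin σ)) ∨
      ∃ P : ∀ p, G.Walk (x p) (y p), ∀ p, P p ∈ F p ∧
        (∀ z ∈ Z, z ≠ x p → z ≠ y p → Anticomplete G (interiorW (P p)) {z}) ∧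
        ∀ q, q ≠ p → Anticomplete G (interiorW (P p)) (interiorW (P q)) := by
  choose Fam hFamF hFamcard using fun p => exists_subset_card_eq
    ((familySize_monotone a N ρ σ ((card_le_univ {q | p < q}).trans hN)).trans (hcard p))
  have hsize : ∀ p, #Z * ρ + Fintype.card ι * ρ +
      ∑ q with p < q, (#(Fam q)).choose ρ * (σ - 1) < #(Fam p) := fun p => by
    simp only [hFamcard]
    have := add_sum_lt_familySize (a := a) (ρ := ρ) (σ := σ) hN p
    have := Nat.mul_le_mul_right ρ hN
    omega
  refine (linearInducedModel_or_exists_anticomplete_paths (fun p P hP => hpath p P (hFamF p hP))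
    (fun p => (hanti p).mono (coe_subset.2 (hFamF p)))
    (fun p q hpq P hP Q hQ => hdisj p q hpq P (hFamF p hP) Q (hFamF q hQ))
    (fun p z hz hzx hzy => (card_le_card (filter_subset_filter _ (hFamF p))).trans
      (hZ p z hz hzx hzy)) hsize).imp id fun ⟨P, hP⟩ => ⟨P, fun p => ⟨hFamF p (hP p).1, (hP p).2⟩⟩

end FamilySizes

theorem pair_eq_pair_of_lt {s : ℕ} {v : Fin s → V} (hv : Injective v) {i j k l : Fin s}
    (hij : i < j) (hkl : k < l) (h : ({v i, v j} : Set V) = {v k, v l}) : i = k ∧ j = l := by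
  rcases Set.pair_eq_pair_iff.1 h with ⟨hik, hjl⟩ | ⟨hil, hjk⟩
  · exact ⟨hv hik, hv hjl⟩
  · exact absurd (hv hjk ▸ hv hil ▸ hij) (not_lt.2 hkl.le)

theorem inducedProperSubdivisionK_of_paths {s : ℕ} {v : Fin s → V} (hv : Injective v)
    (hstable : ∀ i j, i ≠ j → ¬ G.Adj (v i) (v j))
    (P : ∀ p : {p : Fin s × Fin s // p.1 < p.2}, G.Walk (v p.1.1) (v p.1.2))
    (hP : ∀ p, IsInducedPathW G (P p) ∧ (interiorW (P p)).Nonempty)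
    (hanti : Pairwise (Anticomplete G on fun p => interiorW (P p)))
    (hvert : ∀ p m, m ≠ p.1.1 → m ≠ p.1.2 → Anticomplete G (interiorW (P p)) {v m}) :
    InducedProperSubdivisionK G s := by
  have hreach : ∀ i j, G.Reachable (v i) (v j) := by
    intro i j
    rcases lt_trichotomy i j with h | rfl | h
    exacts [⟨P ⟨(i, j), h⟩⟩, .refl _, ⟨(P ⟨(j, i), h⟩).reverse⟩]
  refine ⟨v, fun i j => if h : i < j then P ⟨(i, j), h⟩ else (hreach i j).some, hv, hstable,
    fun i j h => by simpa only [dif_pos h] using hP _, ?_, ?_⟩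
  · intro i j k l hij hkl hne
    simp only [dif_pos hij, dif_pos hkl]
    exact anticomplete_iff.1 (hanti fun h => hne (congrArg Subtype.val h))
  · intro i j k hij hki hkj a ha
    simp only [dif_pos hij] at ha
    simpa [ne_comm, G.adj_comm] using anticomplete_iff.1 (hvert ⟨(i, j), hij⟩ k hki hkj) a ha

structure IsStrongBlock (G : SimpleGraph V) (B : Finset V) (F : ∀ x y : V, Finset (G.Walk x y)) :
    Prop where
  isIndepSet : G.IsIndepSet B
  isInducedPathW : ∀ x ∈ B, ∀ y ∈ B, x ≠ y → ∀ P ∈ F x y, IsInducedPathW G P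
  pairwise_anticomplete : ∀ x ∈ B, ∀ y ∈ B, x ≠ y →
    (F x y : Set (G.Walk x y)).Pairwise (Anticomplete G on interiorW)
  disjoint : ∀ x ∈ B, ∀ y ∈ B, ∀ x' ∈ B, ∀ y' ∈ B, x ≠ y → x' ≠ y' →
    ({x, y} : Set V) ≠ {x', y'} → ∀ P ∈ F x y, ∀ P' ∈ F x' y',
      Disjoint (interiorW P) (interiorW P')

noncomputable def heavyVertices {x y : V} (B : Finset V) (F : Finset (G.Walk x y)) (ρ : ℕ) :
    Finset V :=
  {z ∈ B | z ≠ x ∧ z ≠ y ∧ ρ < #{P ∈ F | ¬ Anticomplete G (interiorW P) {z}}}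

namespace IsStrongBlock

variable {B : Finset V} {F : ∀ x y : V, Finset (G.Walk x y)}

theorem isPathSet_interiorW (hF : IsStrongBlock G B F) {x y : V} (hx : x ∈ B) (hy : y ∈ B)
    (hxy : x ≠ y) {P : G.Walk x y} (hP : P ∈ F x y) : IsPathSet G (interiorW P) :=
  (hF.isInducedPathW x hx y hy hxy P hP).isPathSet_interiorW hxy (hF.isIndepSet hx hy hxy)

/-- A vertex `z` outside the ends lies in the interior of at most one path of `F x y`, so a
heavy vertex is attached to at least `ρ` of them; the heavy vertices themselves are stable. -/
theorem linearInducedModel_of_heavyVertices (hF : IsStrongBlock G B F) {x y : V} (hx : x ∈ B)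
    (hy : y ∈ B) (hxy : x ≠ y) {ρ σ : ℕ}
    (h : (#(F x y)).choose ρ * (σ - 1) < #(heavyVertices B (F x y) ρ)) :
    LinearInducedModel G (completeBipartiteGraph (Fin ρ) (Fin σ)) := by
  refine linearInducedModel_of_many_attached (X := interiorW) (Y := fun z => {z})
    (fun P hP => hF.isPathSet_interiorW hx hy hxy hP) (fun z _ => isPathSet_singleton z)
    (hF.pairwise_anticomplete x hx y hy hxy) ?_ ?_ h
  · intro a ha b hb hab
    simp only [heavyVertices, mem_coe, mem_filter] at ha hb
    exact anticomplete_iff.2 fun a' ha' b' hb' => by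
      rw [Set.mem_singleton_iff] at ha' hb'
      subst ha' hb'
      exact ⟨hab, hF.isIndepSet ha.1 hb.1 hab⟩
  · intro z hz
    have hcover : {P ∈ F x y | ¬ Anticomplete G (interiorW P) {z}} ⊆
        {P ∈ F x y | Disjoint (interiorW P) {z} ∧ ¬ Anticomplete G (interiorW P) {z}} ∪
          {P ∈ F x y | z ∈ interiorW P} := by
      intro P hP
      simp only [mem_union, mem_filter, Set.disjoint_singleton_right] at hP ⊢
      tauto
    have hunique : #{P ∈ F x y | z ∈ interiorW P} ≤ 1 := by
      refine card_le_one.2 fun P hP Q hQ => by_contra fun hPQ => ?_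
      rw [mem_filter] at hP hQ
      exact (anticomplete_iff.1 (hF.pairwise_anticomplete x hx y hy hxy hP.1 hQ.1 hPQ)
        z hP.2 z hQ.2).1 rfl
    have := (card_le_card hcover).trans (card_union_le _ _)
    have := (mem_filter.1 hz).2.2.2
    omega

theorem inducedProperSubdivisionK_or_linearInducedModel (hF : IsStrongBlock G B F)
    {S : Finset V} {s ρ σ : ℕ} (hSB : S ⊆ B) (hS : #S = s)
    (hlight : ∀ x ∈ S, ∀ y ∈ S, ∀ z ∈ S, x ≠ y → z ≠ x → z ≠ y →
      #{P ∈ F x y | ¬ Anticomplete G (interiorW P) {z}} ≤ ρ)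
    (hcard : ∀ x ∈ S, ∀ y ∈ S, x ≠ y →
      familySize (s * ρ + s * s * ρ) (s * s) ρ σ (s * s) ≤ #(F x y)) :
    InducedProperSubdivisionK G s ∨
      LinearInducedModel G (completeBipartiteGraph (Fin ρ) (Fin σ)) := by
  let v : Fin s → V := fun i => (S.equivFinOfCardEq hS).symm i
  have hv : Injective v := Subtype.val_injective.comp (Equiv.injective _)
  have hvS : ∀ i, v i ∈ S := fun i => ((S.equivFinOfCardEq hS).symm i).2
  have hvB : ∀ i, v i ∈ B := fun i => hSB (hvS i)
  let ι := {p : Fin s × Fin s // p.1 < p.2}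
  -- any order of the pairs will do
  let _ : LinearOrder ι := LinearOrder.lift' _ (Fintype.equivFin ι).injective
  have hne : ∀ p : ι, v p.1.1 ≠ v p.1.2 := fun p => hv.ne p.2.ne
  rcases linearInducedModel_or_exists_anticomplete_paths_of_le_card (Z := S)
    ((Fintype.card_subtype_le _).trans (by simp)) (by rw [hS])
    (fun p P hP => hF.isPathSet_interiorW (hvB _) (hvB _) (hne p) hP)
    (fun p => hF.pairwise_anticomplete _ (hvB _) _ (hvB _) (hne p))
    (fun p q hpq P hP Q hQ => hF.disjoint _ (hvB _) _ (hvB _) _ (hvB _) _ (hvB _) (hne p) (hne q)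
      (fun h => hpq (Subtype.ext (Prod.ext_iff.2 (pair_eq_pair_of_lt hv p.2 q.2 h)))) P hP Q hQ)
    (fun p z hz => hlight _ (hvS _) _ (hvS _) z hz (hne p))
    (fun p => hcard _ (hvS _) _ (hvS _) (hne p)) with hmodel | ⟨P, hP⟩
  · exact Or.inr hmodel
  refine Or.inl (inducedProperSubdivisionK_of_paths hv
    (fun i j hij => hF.isIndepSet (hvB i) (hvB j) (hv.ne hij)) P (fun p => ?_)
    (fun p q hpq => (hP p).2.2 q hpq.symm)
    fun p m hm₁ hm₂ => (hP p).2.1 _ (hvS m) (hv.ne hm₁) (hv.ne hm₂))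
  have hind := hF.isInducedPathW _ (hvB _) _ (hvB _) (hne p) _ (hP p).1
  exact ⟨hind, (hind.isPathSet_interiorW (hne p) (hF.isIndepSet (hvB _) (hvB _) (hne p))).nonempty⟩

end IsStrongBlock

theorem exists_isStrongBlock {B : Finset V} {𝒬 : ∀ x y : V, Set (G.Walk x y)} {g : ℕ}
    (hg : 0 < g) (hstable : ∀ a ∈ B, ∀ b ∈ B, a ≠ b → ¬ G.Adj a b)
    (h𝒬 : ∀ x ∈ B, ∀ y ∈ B, x ≠ y → g ≤ (𝒬 x y).ncard ∧ ∀ P ∈ 𝒬 x y, IsInducedPathW G P)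
    (hanti : ∀ x ∈ B, ∀ y ∈ B, x ≠ y → ∀ P ∈ 𝒬 x y, ∀ Q ∈ 𝒬 x y, P ≠ Q →
      ∀ u ∈ interiorW P, ∀ w ∈ interiorW Q, u ≠ w ∧ ¬ G.Adj u w)
    (hdisj : ∀ x ∈ B, ∀ y ∈ B, ∀ x' ∈ B, ∀ y' ∈ B, x ≠ y → x' ≠ y' →
      ({x, y} : Set V) ≠ {x', y'} → ∀ P ∈ 𝒬 x y, ∀ P' ∈ 𝒬 x' y',
        ∀ u ∈ interiorW P, u ∉ interiorW P') :
    ∃ F : ∀ x y : V, Finset (G.Walk x y),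
      IsStrongBlock G B F ∧ ∀ x ∈ B, ∀ y ∈ B, x ≠ y → #(F x y) = g := by
  have hF : ∀ x y, ∃ F : Finset (G.Walk x y), ↑F ⊆ 𝒬 x y ∧ (x ∈ B → y ∈ B → x ≠ y → #F = g) := by
    intro x y
    by_cases h : x ∈ B ∧ y ∈ B ∧ x ≠ y
    · obtain ⟨F, hF𝒬, hFcard⟩ := Set.exists_finset_subset_card_eq hg (h𝒬 x h.1 y h.2.1 h.2.2).1
      exact ⟨F, hF𝒬, fun _ _ _ => hFcard⟩
    · exact ⟨∅, by simp, fun hx hy hxy => absurd ⟨hx, hy, hxy⟩ h⟩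
  choose F hF𝒬 hFcard using hF
  refine ⟨F, ⟨fun a ha b hb hab => hstable a ha b hb hab, fun x hx y hy hxy P hP =>
    (h𝒬 x hx y hy hxy).2 P (hF𝒬 x y hP), fun x hx y hy hxy P hP Q hQ hPQ => ?_,
    fun x hx y hy x' hx' y' hy' hxy hxy' hne P hP P' hP' => ?_⟩,
    fun x hx y hy => hFcard x y hx hy⟩
  · exact anticomplete_iff.2 (hanti x hx y hy hxy P (hF𝒬 x y hP) Q (hF𝒬 x y hQ) hPQ)
  · exact Set.disjoint_left.2 (hdisj x hx y hy x' hx' y' hy' hxy hxy' hne P (hF𝒬 x y hP) P'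
      (hF𝒬 x' y' hP'))

theorem stmt10 (s ρ σ : ℕ) :
    ∃ f g : ℕ, 0 < f ∧ 0 < g ∧
      ∀ (V : Type) [Fintype V] (G : SimpleGraph V) (B : Finset V)
        (𝒬 : ∀ x y : V, Set (G.Walk x y)),
        f ≤ B.card →
        (∀ a ∈ B, ∀ b ∈ B, a ≠ b → ¬ G.Adj a b) →
        (∀ x ∈ B, ∀ y ∈ B, x ≠ y →
          g ≤ (𝒬 x y).ncard ∧ (∀ P ∈ 𝒬 x y, IsInducedPathW G P)) →
        (∀ x ∈ B, ∀ y ∈ B, x ≠ y → ∀ P ∈ 𝒬 x y, ∀ Q ∈ 𝒬 x y, P ≠ Q →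
          ∀ u ∈ interiorW P, ∀ w ∈ interiorW Q, u ≠ w ∧ ¬ G.Adj u w) →
        (∀ x ∈ B, ∀ y ∈ B, ∀ x' ∈ B, ∀ y' ∈ B, x ≠ y → x' ≠ y' →
          ({x, y} : Set V) ≠ {x', y'} →
          ∀ P ∈ 𝒬 x y, ∀ P' ∈ 𝒬 x' y',
            ∀ u ∈ interiorW P, u ∉ interiorW P') →
        InducedProperSubdivisionK G s ∨
          LinearInducedModel G (completeBipartiteGraph (Fin ρ) (Fin σ)) := by
  set g := familySize (s * ρ + s * s * ρ) (s * s) ρ σ (s * s)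
  set b := g.choose ρ * (σ - 1)
  have hg : 0 < g := (familySize_monotone _ _ ρ σ (Nat.zero_le _)).trans_lt' (Nat.succ_pos _)
  refine ⟨6 * (b * s.choose 3) + 4 + s, g, by omega, hg, ?_⟩
  intro V _ G B 𝒬 hB hstable h𝒬 hanti hdisj
  obtain ⟨F, hF, hFcard⟩ := exists_isStrongBlock hg hstable h𝒬 hanti hdisj
  by_cases hheavy : ∃ x ∈ B, ∃ y ∈ B, x ≠ y ∧ b < #(heavyVertices B (F x y) ρ)
  · obtain ⟨x, hx, y, hy, hxy, hlt⟩ := hheavy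
    exact Or.inr (hF.linearInducedModel_of_heavyVertices hx hy hxy (by rwa [hFcard x hx y hy hxy]))
  push Not at hheavy
  obtain ⟨S, hSB, hS, hSlight⟩ := exists_subset_card_eq_forall_notMem _ hheavy hB
  refine hF.inducedProperSubdivisionK_or_linearInducedModel hSB hS
    (fun x hx y hy z hz hxy hzx hzy => ?_)
    fun x hx y hy hxy => (hFcard x (hSB hx) y (hSB hy) hxy).ge
  simpa [heavyVertices, hSB hz, hzx, hzy] using hSlight x hx y hy z hz hxy hzx hzy
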